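/- arXiv:2105.11365 — 5 statements merged into one kernel-verified Lean document; each statement's English description precedes it below -/
import Mathlib

section
/- For positive integers k ≤ n, the generating function P_{n,k}(t) := (1/L(n,k))·Σ_{j=k}^n t^j s(n,j) S(j,k) satisfies P_{n,k}(t) = (1/C(n-1,k-1))·Σ_{m=1}^{k} (-1)^{k-m} C(k,m)·(tm)(tm+1)···(tm+n-1)/n!, as an identity of polynomials in t. -/
/-!
Expanding each rising factorial, `(mt)(mt+1)⋯(mt+n-1) = ∑ⱼ s(n,j) mʲ tʲ`, reduces the identity,
coefficient by coefficient, to `∑ₘ (-1)^(k-m) C(k,m) mʲ = k! S(j,k)`. The left side is the `k`-th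
forward difference at `0` of `x ↦ xʲ`, and the Newton expansion `xʲ = ∑ᵢ S(j,i) i! C(x,i)` evaluates
it, since `Δᵏ C(·,i)` vanishes at `0` unless `i = k`.
-/

/-- Unsigned Stirling numbers of the first kind. -/
def stirling1 : ℕ → ℕ → ℕ
  | 0, 0 => 1
  | 0, _ + 1 => 0
  | _ + 1, 0 => 0
  | n + 1, k + 1 => stirling1 n k + n * stirling1 n (k + 1)

/-- Stirling numbers of the second kind. -/
def stirling2 : ℕ → ℕ → ℕ
  | 0, 0 => 1
  | 0, _ + 1 => 0
  | _ + 1, 0 => 0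
  | n + 1, k + 1 => stirling2 n k + (k + 1) * stirling2 n (k + 1)

open scoped BigOperators
/-- The Lah number `L(n,k) = (n!/k!)·C(n-1,k-1)`, as a rational number. -/
noncomputable def lahNumber (n k : ℕ) : ℚ :=
  (n.factorial : ℚ) / (k.factorial : ℚ) * ((n - 1).choose (k - 1) : ℚ)

open Finset Polynomial

theorem stirling1_eq_stirlingFirst : stirling1 = Nat.stirlingFirst := by
  funext n k
  induction n generalizing k with
  | zero => cases k <;> rfl
  | succ n ih =>
    cases k with
    | zero => rfl
    | succ k => rw [stirling1, Nat.stirlingFirst_succ_succ, ih, ih, add_comm]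

theorem stirling2_eq_stirlingSecond : stirling2 = Nat.stirlingSecond := by
  funext n k
  induction n generalizing k with
  | zero => cases k <;> rfl
  | succ n ih =>
    cases k with
    | zero => rfl
    | succ k => rw [stirling2, Nat.stirlingSecond_succ_succ, ih, ih, add_comm]

theorem coeff_ascPochhammer_nat (n j : ℕ) :
    (ascPochhammer ℕ n).coeff j = Nat.stirlingFirst n j := by
  induction n generalizing j with
  | zero => cases j <;> simp [coeff_one]
  | succ n ih =>
    rw [ascPochhammer_succ_right, mul_add, coeff_add, ← C_eq_natCast, coeff_mul_C, ih]
    cases j with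
    | zero => cases n <;> simp
    | succ j => rw [coeff_mul_X, ih, Nat.stirlingFirst_succ_succ, Nat.cast_id, mul_comm, add_comm]

theorem prod_range_add_natCast_eq_sum_stirlingFirst {R : Type*} [CommSemiring R] (n : ℕ) (y : R) :
    ∏ i ∈ range n, (y + i) = ∑ j ∈ range (n + 1), (Nat.stirlingFirst n j : R) * y ^ j := by
  have hprod : (ascPochhammer R n).eval y = ∏ i ∈ range n, (y + i) := by
    induction n with
    | zero => simp
    | succ n ih => rw [ascPochhammer_succ_eval, ih, prod_range_succ]
  rw [← hprod, ascPochhammer_eval₂ (Nat.castRingHom R),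
    eval₂_eq_sum_range, ascPochhammer_natDegree]
  simp only [coeff_ascPochhammer_nat, eq_natCast]

theorem mul_descFactorial (m i : ℕ) :
    m * m.descFactorial i = m.descFactorial (i + 1) + i * m.descFactorial i := by
  rw [Nat.descFactorial_succ, ← add_mul]
  rcases le_or_gt i m with h | h
  · rw [Nat.sub_add_cancel h]
  · simp [Nat.descFactorial_eq_zero_iff_lt.2 h]

theorem pow_eq_sum_stirlingSecond_mul_descFactorial (m j : ℕ) :
    m ^ j = ∑ i ∈ range (j + 1), Nat.stirlingSecond j i * m.descFactorial i := by
  induction j with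
  | zero => simp
  | succ j ih =>
    have hshift : ∑ i ∈ range (j + 1), Nat.stirlingSecond j i * (i * m.descFactorial i) =
        ∑ i ∈ range (j + 1), (i + 1) * Nat.stirlingSecond j (i + 1) * m.descFactorial (i + 1) := by
      rw [sum_range_succ', sum_range_succ, Nat.stirlingSecond_eq_zero_of_lt j.lt_succ_self]
      simp only [mul_assoc, mul_left_comm, zero_mul, mul_zero]
    rw [sum_range_succ', Nat.stirlingSecond_succ_zero, zero_mul, add_zero, pow_succ', ih, mul_sum]
    calc ∑ i ∈ range (j + 1), m * (Nat.stirlingSecond j i * m.descFactorial i)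
        = ∑ i ∈ range (j + 1), (Nat.stirlingSecond j i * m.descFactorial (i + 1) +
            Nat.stirlingSecond j i * (i * m.descFactorial i)) :=
          sum_congr rfl fun i _ => by rw [mul_left_comm, mul_descFactorial, mul_add]
      _ = ∑ i ∈ range (j + 1), Nat.stirlingSecond (j + 1) (i + 1) * m.descFactorial (i + 1) := by
          rw [sum_add_distrib, hshift, ← sum_add_distrib]
          exact sum_congr rfl fun i _ => by rw [Nat.stirlingSecond_succ_succ]; ring

theorem sum_alternating_choose_mul_pow {R : Type*} [CommRing R] (j k : ℕ) :
    ∑ m ∈ range (k + 1), (-1 : R) ^ (k - m) * k.choose m * (m : R) ^ j =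
      k.factorial * Nat.stirlingSecond j k := by
  suffices hint : ∑ m ∈ range (k + 1), (-1 : ℤ) ^ (k - m) * k.choose m * (m : ℤ) ^ j =
      k.factorial * Nat.stirlingSecond j k by
    exact_mod_cast congrArg (Int.cast : ℤ → R) hint
  have hnewton : (fun x : ℕ => (x : ℤ) ^ j) =
      ∑ i ∈ range (j + 1),
        (Nat.stirlingSecond j i * i.factorial : ℤ) • fun x : ℕ => (x.choose i : ℤ) := by
    funext x
    rw [Finset.sum_apply]
    simp only [Pi.smul_apply, smul_eq_mul, mul_assoc]
    exact_mod_cast (pow_eq_sum_stirlingSecond_mul_descFactorial x j).trans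
      (sum_congr rfl fun i _ => by rw [Nat.descFactorial_eq_factorial_mul_choose])
  calc ∑ m ∈ range (k + 1), (-1 : ℤ) ^ (k - m) * k.choose m * (m : ℤ) ^ j
      = (fwdDiff 1)^[k] (fun x : ℕ => (x : ℤ) ^ j) 0 := by
        simp [fwdDiff_iter_eq_sum_shift]
    _ = ∑ i ∈ range (j + 1),
          (Nat.stirlingSecond j i * i.factorial : ℤ) * if k = i then 1 else 0 := by
        simp only [hnewton, fwdDiff_iter_finsetSum, fwdDiff_iter_const_smul, Finset.sum_apply,
          Pi.smul_apply, fwdDiff_iter_choose_zero, smul_eq_mul]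
    _ = k.factorial * Nat.stirlingSecond j k := by
        simp only [mul_ite, mul_one, mul_zero, sum_ite_eq, mem_range]
        split_ifs with hkj
        · ring
        · simp [Nat.stirlingSecond_eq_zero_of_lt (by omega : j < k)]

theorem sum_alternating_choose_smul_prod {R : Type*} [CommRing R] {n : ℕ} (hn : n ≠ 0) (k : ℕ) :
    ∑ m ∈ Icc 1 k, ((-1 : R) ^ (k - m) * k.choose m) • ∏ i ∈ range n, (C (m : R) * X + C (i : R)) =
      (k.factorial : R) • ∑ j ∈ range (n + 1),
        (Nat.stirlingFirst n j * Nat.stirlingSecond j k : R) • (X : R[X]) ^ j := by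
  have hsub : Icc 1 k ⊆ range (k + 1) := fun m hm =>
    mem_range.2 (Nat.lt_succ_of_le (mem_Icc.1 hm).2)
  rw [sum_subset hsub fun m hm hm' => by
    obtain rfl : m = 0 := by
      by_contra h
      exact hm' (mem_Icc.2 ⟨Nat.pos_of_ne_zero h, Nat.lt_succ_iff.1 (mem_range.1 hm)⟩)
    rw [prod_eq_zero (mem_range.2 (Nat.pos_of_ne_zero hn)) (by simp), smul_zero]]
  simp_rw [map_natCast C, prod_range_add_natCast_eq_sum_stirlingFirst, smul_sum,
    sum_comm (s := range (k + 1))]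
  refine sum_congr rfl fun j _ => ?_
  calc ∑ m ∈ range (k + 1), ((-1 : R) ^ (k - m) * (k.choose m : R)) •
        ((Nat.stirlingFirst n j : R[X]) * ((m : R[X]) * X) ^ j)
      = ((Nat.stirlingFirst n j : R) *
          ∑ m ∈ range (k + 1), (-1 : R) ^ (k - m) * k.choose m * (m : R) ^ j) •
          (X : R[X]) ^ j := by
        rw [mul_sum, sum_smul]
        refine sum_congr rfl fun m _ => ?_
        simp only [mul_pow, ← map_natCast C, ← C_pow, smul_eq_C_mul, C_mul]
        ring
    _ = (k.factorial : R) •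
          (Nat.stirlingFirst n j * Nat.stirlingSecond j k : R) • (X : R[X]) ^ j := by
        rw [sum_alternating_choose_mul_pow, smul_smul, mul_left_comm]

open Polynomial in
theorem stmt_3 (n k : ℕ) (hk : 1 ≤ k) (hkn : k ≤ n) :
    (lahNumber n k)⁻¹ •
        (∑ j ∈ Finset.Icc k n, ((stirling1 n j * stirling2 j k : ℚ)) • (X : ℚ[X]) ^ j) =
      (((n - 1).choose (k - 1) : ℚ))⁻¹ •
        ∑ m ∈ Finset.Icc 1 k,
          ((-1 : ℚ) ^ (k - m) * (k.choose m : ℚ) / (n.factorial : ℚ)) •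
            ∏ i ∈ Finset.range n, (Polynomial.C (m : ℚ) * X + Polynomial.C (i : ℚ)) := by
  have hsupp :
      ∑ j ∈ Icc k n, (Nat.stirlingFirst n j * Nat.stirlingSecond j k : ℚ) • (X : ℚ[X]) ^ j =
      ∑ j ∈ range (n + 1), (Nat.stirlingFirst n j * Nat.stirlingSecond j k : ℚ) • (X : ℚ[X]) ^ j :=
    sum_subset (fun j hj => mem_range.2 (Nat.lt_succ_of_le (mem_Icc.1 hj).2)) fun j hj hj' => by
      rw [Nat.stirlingSecond_eq_zero_of_lt, Nat.cast_zero, mul_zero, zero_smul]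
      by_contra! hkj
      exact hj' (mem_Icc.2 ⟨hkj, Nat.lt_succ_iff.1 (mem_range.1 hj)⟩)
  have hfactor : ∀ m ∈ Icc 1 k,
      ((-1 : ℚ) ^ (k - m) * (k.choose m : ℚ) / (n.factorial : ℚ)) •
        ∏ i ∈ range n, (C (m : ℚ) * X + C (i : ℚ)) =
      (n.factorial : ℚ)⁻¹ • ((-1 : ℚ) ^ (k - m) * (k.choose m : ℚ)) •
        ∏ i ∈ range n, (C (m : ℚ) * X + C (i : ℚ)) := fun m _ => by
    rw [div_eq_inv_mul, mul_smul]
  rw [sum_congr rfl hfactor, ← smul_sum, sum_alternating_choose_smul_prod (by omega),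
    stirling1_eq_stirlingFirst, stirling2_eq_stirlingSecond, hsupp, smul_smul, smul_smul]
  congr 1
  have hchoose : 0 < (n - 1).choose (k - 1) := Nat.choose_pos (by omega)
  rw [lahNumber]
  field_simp
end

section
/- For all positive integers n and k with k ≤ n, Σ_{i=1}^{n-k+1} (1/i)·C(n-i,k-1) = Σ_{i=1}^{n-k+1} ((-1)^{i+1}/i)·C(n, k+i-1). -/
/-!
As functions of `m = n - k` and `j = k - 1`, both sides satisfy Pascal's recurrence
`f (m + 1) (j + 1) = f m (j + 1) + f (m + 1) j`, and this holds for arbitrary coefficient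
sequences in place of `1 / i` and `(-1) ^ (i + 1) / i`; so the two sides agree as soon as they
agree on the boundary. For `m = 0` both are `1`. For `j = 0` the left side is the harmonic number
`H (m + 1)` and the right side is `∑ (-1) ^ (i + 1) / i * C(m + 1, i)`, which is also `H (m + 1)`:
its increment from `m` to `m + 1` is `∑ (-1) ^ (i + 1) / i * C(m, i - 1)
= 1 / (m + 1) * ∑ (-1) ^ (i + 1) * C(m + 1, i) = 1 / (m + 1)`.
-/

open scoped BigOperators
open Finset

theorem Finset.sum_Icc_one_eq_sum_range {M : Type*} [AddCommMonoid M] (f : ℕ → M) (n : ℕ) :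
    ∑ i ∈ Icc 1 n, f i = ∑ i ∈ range n, f (i + 1) := by
  rw [range_eq_Ico, sum_Ico_add', zero_add, Ico_add_one_right_eq_Icc]

theorem eq_of_pascal_recurrence {α : Type*} [Add α] {f g : ℕ → ℕ → α}
    (hf : ∀ m j, f (m + 1) (j + 1) = f m (j + 1) + f (m + 1) j)
    (hg : ∀ m j, g (m + 1) (j + 1) = g m (j + 1) + g (m + 1) j)
    (h_row : ∀ j, f 0 j = g 0 j) (h_col : ∀ m, f m 0 = g m 0) : f = g := by
  funext m j
  induction m generalizing j with
  | zero => exact h_row j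
  | succ m ihm =>
    induction j with
    | zero => exact h_col (m + 1)
    | succ j ihj => rw [hf, hg, ihm, ihj]

section ChooseSums

variable {R : Type*} [Semiring R]

-- The summation index is shifted to start at `0`; the theorem is the case `m = n - k`, `j = k - 1`.
def sumMulChooseSubTop (a : ℕ → R) (m j : ℕ) : R :=
  ∑ i ∈ range (m + 1), a i * ((m + j - i).choose j : R)

def sumMulChooseAddBottom (b : ℕ → R) (m j : ℕ) : R :=
  ∑ i ∈ range (m + 1), b i * ((m + j + 1).choose (j + i + 1) : R)

theorem sumMulChooseSubTop_succ_succ (a : ℕ → R) (m j : ℕ) :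
    sumMulChooseSubTop a (m + 1) (j + 1) =
      sumMulChooseSubTop a m (j + 1) + sumMulChooseSubTop a (m + 1) j := by
  have pascal : ∀ i ∈ range (m + 2), a i * ((m + 1 + (j + 1) - i).choose (j + 1) : R) =
      a i * ((m + 1 + j - i).choose (j + 1) : R) + a i * ((m + 1 + j - i).choose j : R) := by
    intro i hi
    rw [show m + 1 + (j + 1) - i = m + 1 + j - i + 1 by grind, Nat.choose_succ_succ', Nat.cast_add,
      mul_add, add_comm]
  simp only [sumMulChooseSubTop]
  rw [sum_congr rfl pascal, sum_add_distrib, sum_range_succ (n := m + 1),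
    show m + 1 + j - (m + 1) = j by omega, Nat.choose_succ_self, Nat.cast_zero, mul_zero, add_zero]
  congr 2 with i
  rw [show m + 1 + j - i = m + (j + 1) - i by omega]

theorem sumMulChooseAddBottom_succ_succ (b : ℕ → R) (m j : ℕ) :
    sumMulChooseAddBottom b (m + 1) (j + 1) =
      sumMulChooseAddBottom b m (j + 1) + sumMulChooseAddBottom b (m + 1) j := by
  have pascal : ∀ i ∈ range (m + 2), b i * ((m + 1 + (j + 1) + 1).choose (j + 1 + i + 1) : R) =
      b i * ((m + (j + 1) + 1).choose (j + 1 + i + 1) : R) +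
        b i * ((m + 1 + j + 1).choose (j + i + 1) : R) := by
    intro i _
    rw [show m + 1 + (j + 1) + 1 = m + 1 + j + 1 + 1 by omega,
      show m + (j + 1) + 1 = m + 1 + j + 1 by omega, show j + 1 + i + 1 = j + i + 1 + 1 by omega,
      Nat.choose_succ_succ', Nat.cast_add, mul_add, add_comm]
  simp only [sumMulChooseAddBottom]
  rw [sum_congr rfl pascal, sum_add_distrib, sum_range_succ (n := m + 1),
    Nat.choose_eq_zero_of_lt (by omega), Nat.cast_zero, mul_zero, add_zero]

theorem sumMulChooseSubTop_eq_sumMulChooseAddBottom {a b : ℕ → R}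
    (h : ∀ n, ∑ i ∈ range n, a i = ∑ i ∈ range n, b i * (n.choose (i + 1) : R)) :
    sumMulChooseSubTop a = sumMulChooseAddBottom b := by
  refine eq_of_pascal_recurrence (sumMulChooseSubTop_succ_succ a) (sumMulChooseAddBottom_succ_succ b)
    (fun j ↦ ?_) (fun m ↦ ?_)
  · simpa [sumMulChooseSubTop, sumMulChooseAddBottom] using h 1
  · simpa [sumMulChooseSubTop, sumMulChooseAddBottom] using h (m + 1)

end ChooseSums

theorem sum_range_neg_one_pow_mul_choose_succ {R : Type*} [Ring R] (n : ℕ) :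
    ∑ i ∈ range (n + 1), (-1 : R) ^ i * ((n + 1).choose (i + 1) : R) = 1 := by
  have h := Int.alternating_sum_range_choose_of_ne (n := n + 1) n.succ_ne_zero
  rw [sum_range_succ'] at h
  have h' : ∑ i ∈ range (n + 1), (-1 : ℤ) ^ i * ((n + 1).choose (i + 1) : ℤ) = 1 := by
    simp only [pow_succ, mul_neg_one, neg_mul, sum_neg_distrib, pow_zero, Nat.choose_zero_right,
      Nat.cast_one, mul_one] at h
    linarith
  exact_mod_cast congrArg (Int.cast : ℤ → R) h'

theorem sum_range_neg_one_pow_div_mul_choose (n : ℕ) :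
    ∑ i ∈ range (n + 1), (-1 : ℚ) ^ i / (i + 1) * (n.choose i : ℚ) = 1 / (n + 1) := by
  have absorb : ∀ i ∈ range (n + 1), (-1 : ℚ) ^ i / (i + 1) * (n.choose i : ℚ) =
      (-1 : ℚ) ^ i * ((n + 1).choose (i + 1) : ℚ) / (n + 1) := by
    intro i _
    have h : ((n : ℚ) + 1) * n.choose i = (n + 1).choose (i + 1) * (i + 1) := by
      exact_mod_cast Nat.add_one_mul_choose_eq n i
    rw [div_mul_eq_mul_div, div_eq_div_iff (by positivity) (by positivity)]
    linear_combination (-1 : ℚ) ^ i * h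
  rw [sum_congr rfl absorb, ← sum_div, sum_range_neg_one_pow_mul_choose_succ]

theorem sum_range_neg_one_pow_div_mul_choose_succ_eq_harmonic (n : ℕ) :
    ∑ i ∈ range n, (-1 : ℚ) ^ i / (i + 1) * (n.choose (i + 1) : ℚ) = harmonic n := by
  induction n with
  | zero => simp
  | succ n ih =>
    simp only [Nat.choose_succ_succ', Nat.cast_add, mul_add, sum_add_distrib]
    rw [sum_range_neg_one_pow_div_mul_choose, sum_range_succ (n := n), Nat.choose_succ_self,
      Nat.cast_zero, mul_zero, add_zero, ih, harmonic_succ]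
    push_cast
    ring

theorem stmt_5 (n k : ℕ) (hk : 1 ≤ k) (hkn : k ≤ n) :
    (∑ i ∈ Finset.Icc 1 (n - k + 1), (1 / (i : ℚ)) * ((n - i).choose (k - 1) : ℚ)) =
      ∑ i ∈ Finset.Icc 1 (n - k + 1), ((-1 : ℚ) ^ (i + 1) / (i : ℚ)) * (n.choose (k + i - 1) : ℚ) := by
  obtain ⟨j, rfl⟩ : ∃ j, k = j + 1 := ⟨k - 1, by omega⟩
  obtain ⟨m, rfl⟩ : ∃ m, n = m + j + 1 := ⟨n - (j + 1), by omega⟩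
  have harmonic_eq (n : ℕ) : ∑ i ∈ range n, 1 / ((i : ℚ) + 1) =
      ∑ i ∈ range n, (-1 : ℚ) ^ i / (i + 1) * (n.choose (i + 1) : ℚ) := by
    rw [sum_range_neg_one_pow_div_mul_choose_succ_eq_harmonic, harmonic]
    push_cast
    simp only [one_div]
  rw [show m + j + 1 - (j + 1) + 1 = m + 1 by omega, sum_Icc_one_eq_sum_range,
    sum_Icc_one_eq_sum_range]
  calc _ = sumMulChooseSubTop (fun i ↦ 1 / ((i : ℚ) + 1)) m j := by
        refine sum_congr rfl fun i _ ↦ ?_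
        rw [Nat.add_sub_add_right, Nat.add_sub_cancel, Nat.cast_add_one]
    _ = sumMulChooseAddBottom (fun i ↦ (-1 : ℚ) ^ i / (i + 1)) m j := by
        rw [sumMulChooseSubTop_eq_sumMulChooseAddBottom harmonic_eq]
    _ = _ := by
        refine sum_congr rfl fun i _ ↦ ?_
        push_cast
        rw [pow_succ, pow_succ, mul_neg_one, mul_neg_one, neg_neg]
        congr 3
        omega
end

section
/- For each positive integer n and k ∈ {1,…,n}, the sequence j ↦ s(n,j)·S(j,k), for j ∈ {k,…,n}, is log-concave: (s(n,j)S(j,k))² ≥ s(n,j+1)S(j+1,k)·s(n,j-1)S(j-1,k) for all k < j < n. -/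
lemma s1_eq_zero : ∀ n k, n < k → stirling1 n k = 0 := by
  intro n
  induction n with
  | zero => intro k hk; match k, hk with | j+1, _ => rfl
  | succ n ih =>
    intro k hk
    match k, hk with
    | j+1, hk =>
      show stirling1 n j + n * stirling1 n (j+1) = 0
      rw [ih j (by omega), ih (j+1) (by omega)]; ring

lemma s2_eq_zero : ∀ n k, n < k → stirling2 n k = 0 := by
  intro n
  induction n with
  | zero => intro k hk; match k, hk with | j+1, _ => rfl
  | succ n ih =>
    intro k hk
    match k, hk with
    | j+1, hk =>
      show stirling2 n j + (j+1) * stirling2 n (j+1) = 0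
      rw [ih j (by omega), ih (j+1) (by omega)]; ring

lemma s1_pos : ∀ n k, k + 1 ≤ n → 0 < stirling1 n (k + 1) := by
  intro n
  induction n with
  | zero => intro k hk; omega
  | succ n ih =>
    intro k hk
    show 0 < stirling1 n k + n * stirling1 n (k+1)
    match k, hk with
    | 0, _ =>
      match n with
      | 0 => simp [stirling1]
      | m+1 => have := ih 0 (by omega); positivity
    | p+1, hk => have := ih p (by omega); positivity

lemma s2_pos : ∀ n k, k + 1 ≤ n → 0 < stirling2 n (k + 1) := by
  intro n
  induction n with
  | zero => intro k hk; omega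
  | succ n ih =>
    intro k hk
    show 0 < stirling2 n k + (k+1) * stirling2 n (k+1)
    match k, hk with
    | 0, _ =>
      match n with
      | 0 => simp [stirling2]
      | m+1 => have := ih 0 (by omega); positivity
    | p+1, hk => have := ih p (by omega); positivity

lemma s1_zero_prop {n k : ℕ} (h : stirling1 n (k + 1) = 0) {m : ℕ} (hm : k + 1 ≤ m) :
    stirling1 n m = 0 := by
  rcases Nat.lt_or_ge n m with hlt | hge
  · exact s1_eq_zero n m hlt
  · exact absurd h (s1_pos n k (le_trans hm hge)).ne'

lemma s2_zero_prop {n k : ℕ} (h : stirling2 n (k + 1) = 0) {m : ℕ} (hm : k + 1 ≤ m) :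
    stirling2 n m = 0 := by
  rcases Nat.lt_or_ge n m with hlt | hge
  · exact s2_eq_zero n m hlt
  · exact absurd h (s2_pos n k (le_trans hm hge)).ne'

/-- Cross inequality from log-concavity plus zero-propagation. -/
lemma cross_of_lc {a b c d : ℕ} (h1 : c * a ≤ b ^ 2) (h2 : d * b ≤ c ^ 2)
    (hb : b = 0 → d = 0) (hc : c = 0 → d = 0) : a * d ≤ b * c := by
  rcases Nat.eq_zero_or_pos (b * c) with h | h
  · rcases Nat.mul_eq_zero.mp h with h | h
    · rw [hb h]; simp
    · rw [hc h]; simp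
  · have key : (a * d) * (b * c) ≤ (b * c) * (b * c) := by
      calc (a * d) * (b * c) = (c * a) * (d * b) := by ring
        _ ≤ b ^ 2 * c ^ 2 := Nat.mul_le_mul h1 h2
        _ = (b * c) * (b * c) := by ring
    exact Nat.le_of_mul_le_mul_right key h

lemma s1_lc : ∀ n k, stirling1 n (k + 2) * stirling1 n k ≤ stirling1 n (k + 1) ^ 2 := by
  intro n
  induction n with
  | zero => intro k; match k with | 0 => simp [stirling1] | j+1 => simp [stirling1]
  | succ n ih =>
    have hcross : ∀ k, stirling1 n k * stirling1 n (k + 3) ≤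
        stirling1 n (k + 1) * stirling1 n (k + 2) := by
      intro k
      refine cross_of_lc (ih k) (ih (k+1)) ?_ ?_
      · intro hb; exact s1_zero_prop hb (by omega)
      · intro hc; exact s1_zero_prop (k := k+1) hc (by omega)
    intro k
    match k with
    | 0 =>
      have h0 : stirling1 (n+1) 0 = 0 := rfl
      rw [h0]; simp
    | m+1 =>
      have e1 : stirling1 (n+1) (m+1) = stirling1 n m + n * stirling1 n (m+1) := rfl
      have e2 : stirling1 (n+1) (m+2) = stirling1 n (m+1) + n * stirling1 n (m+2) := rfl
      have e3 : stirling1 (n+1) (m+3) = stirling1 n (m+2) + n * stirling1 n (m+3) := rfl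
      rw [e1, e2, e3]
      set A := stirling1 n m
      set B := stirling1 n (m+1)
      set C := stirling1 n (m+2)
      set D := stirling1 n (m+3)
      have h1 : C * A ≤ B ^ 2 := ih m
      have h2 : D * B ≤ C ^ 2 := ih (m+1)
      have h3 : A * D ≤ B * C := hcross m
      calc (C + n * D) * (A + n * B)
          = C * A + n * (A * D) + n * (B * C) + n^2 * (D * B) := by ring
        _ ≤ B ^ 2 + n * (B * C) + n * (B * C) + n^2 * (C ^ 2) := by
            gcongr
        _ = (B + n * C) ^ 2 := by ring

lemma s2_row_lc : ∀ n k, stirling2 n (k + 2) * stirling2 n k ≤ stirling2 n (k + 1) ^ 2 := by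
  intro n
  induction n with
  | zero => intro k; match k with | 0 => simp [stirling2] | j+1 => simp [stirling2]
  | succ n ih =>
    have hcross : ∀ k, stirling2 n k * stirling2 n (k + 3) ≤
        stirling2 n (k + 1) * stirling2 n (k + 2) := by
      intro k
      refine cross_of_lc (ih k) (ih (k+1)) ?_ ?_
      · intro hb; exact s2_zero_prop hb (by omega)
      · intro hc; exact s2_zero_prop (k := k+1) hc (by omega)
    intro k
    match k with
    | 0 =>
      have h0 : stirling2 (n+1) 0 = 0 := rfl
      rw [h0]; simp
    | m+1 =>
      have e1 : stirling2 (n+1) (m+1) = stirling2 n m + (m+1) * stirling2 n (m+1) := rfl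
      have e2 : stirling2 (n+1) (m+2) = stirling2 n (m+1) + (m+2) * stirling2 n (m+2) := rfl
      have e3 : stirling2 (n+1) (m+3) = stirling2 n (m+2) + (m+3) * stirling2 n (m+3) := rfl
      rw [e1, e2, e3]
      set A := stirling2 n m
      set B := stirling2 n (m+1)
      set C := stirling2 n (m+2)
      set D := stirling2 n (m+3)
      have h1 : C * A ≤ B ^ 2 := ih m
      have h2 : D * B ≤ C ^ 2 := ih (m+1)
      have h3 : A * D ≤ B * C := hcross m
      calc (C + (m+3) * D) * (A + (m+1) * B)
          = C * A + (m+3) * (A * D) + (m+1) * (B * C) + ((m+1)*(m+3)) * (D * B) := by ring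
        _ ≤ B ^ 2 + (m+3) * (B * C) + (m+1) * (B * C) + ((m+1)*(m+3)) * (C ^ 2) := by
            gcongr
        _ ≤ B ^ 2 + (m+3) * (B * C) + (m+1) * (B * C) + ((m+1)*(m+3)) * (C ^ 2) + C^2 := by
            omega
        _ = (B + (m+2) * C) ^ 2 := by ring

lemma s2_col_lc : ∀ j m, stirling2 (j + 2) (m + 1) * stirling2 j (m + 1) ≤
    stirling2 (j + 1) (m + 1) ^ 2 := by
  intro j m
  match m with
  | 0 =>
    have e1 : stirling2 (j+1) 1 = stirling2 j 0 + 1 * stirling2 j 1 := rfl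
    have e2 : stirling2 (j+2) 1 = stirling2 (j+1) 0 + 1 * stirling2 (j+1) 1 := rfl
    have e0 : stirling2 (j+1) 0 = 0 := rfl
    rw [e2, e0, e1]
    set P := stirling2 j 0
    set Q := stirling2 j 1
    calc (0 + 1 * (P + 1 * Q)) * Q ≤ (P + Q) * (P + Q) := by
          have : (0 + 1 * (P + 1 * Q)) * Q = (P + Q) * Q := by ring
          rw [this]; exact Nat.mul_le_mul_left _ (by omega)
      _ = (P + 1 * Q) ^ 2 := by ring
  | l+1 =>
    have e1 : stirling2 (j+1) (l+2) = stirling2 j (l+1) + (l+2) * stirling2 j (l+2) := rfl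
    have e2 : stirling2 (j+2) (l+2) = stirling2 (j+1) (l+1) + (l+2) * stirling2 (j+1) (l+2) := rfl
    have e3 : stirling2 (j+1) (l+1) = stirling2 j l + (l+1) * stirling2 j (l+1) := rfl
    rw [e2, e3, e1]
    set R := stirling2 j l
    set P := stirling2 j (l+1)
    set Q := stirling2 j (l+2)
    have hrow : Q * R ≤ P ^ 2 := s2_row_lc j l
    nlinarith [hrow, Nat.zero_le (P * Q), Nat.zero_le Q]

theorem stmt_9 (n k j : ℕ) (hk : 1 ≤ k) (hkj : k < j) (hjn : j < n) :
    (stirling1 n j * stirling2 j k) ^ 2 ≥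
      (stirling1 n (j + 1) * stirling2 (j + 1) k) * (stirling1 n (j - 1) * stirling2 (j - 1) k) := by
  obtain ⟨m, rfl⟩ : ∃ m, j = m + 1 := ⟨j - 1, by omega⟩
  obtain ⟨p, rfl⟩ : ∃ p, k = p + 1 := ⟨k - 1, by omega⟩
  simp only [Nat.add_sub_cancel]
  have h1 : stirling1 n (m + 2) * stirling1 n m ≤ stirling1 n (m + 1) ^ 2 := s1_lc n m
  have h2 : stirling2 (m + 2) (p + 1) * stirling2 m (p + 1) ≤ stirling2 (m + 1) (p + 1) ^ 2 :=
    s2_col_lc m p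
  calc (stirling1 n (m + 2) * stirling2 (m + 2) (p+1)) * (stirling1 n m * stirling2 m (p+1))
      = (stirling1 n (m + 2) * stirling1 n m) * (stirling2 (m + 2) (p+1) * stirling2 m (p+1)) := by
        ring
    _ ≤ stirling1 n (m + 1) ^ 2 * stirling2 (m + 1) (p + 1) ^ 2 := Nat.mul_le_mul h1 h2
    _ = (stirling1 n (m + 1) * stirling2 (m + 1) (p + 1)) ^ 2 := by ring
end

section
/- For fixed n ≥ 1, the sequence of unsigned Stirling numbers of the first kind j ↦ s(n,j) is log-concave: s(n,j)² ≥ s(n,j+1)·s(n,j-1) for 1 ≤ j-1, j+1 ≤ n. -/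
lemma stirling1_eq_zero : ∀ n k : ℕ, n < k → stirling1 n k = 0 := by
  intro n
  induction n with
  | zero =>
    intro k hk
    match k with
    | m + 1 => rfl
  | succ n ih =>
    intro k hk
    match k with
    | m + 1 =>
      have h1 : stirling1 n m = 0 := ih m (by omega)
      have h2 : stirling1 n (m + 1) = 0 := ih (m + 1) (by omega)
      simp [stirling1, h1, h2]

lemma stirling1_pos : ∀ n k : ℕ, 1 ≤ k → k ≤ n → 0 < stirling1 n k := by
  intro n
  induction n with
  | zero => intro k h1 h2; omega
  | succ n ih =>
    intro k h1 h2
    match k with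
    | m + 1 =>
      show 0 < stirling1 n m + n * stirling1 n (m + 1)
      match m with
      | 0 =>
        match n with
        | 0 => simp [stirling1]
        | n + 1 =>
          have := ih 1 le_rfl (by omega)
          positivity
      | m + 1 =>
        have := ih (m + 1) (by omega) (by omega)
        positivity

lemma stirling1_logconcave : ∀ n j : ℕ,
    stirling1 n (j + 1) * stirling1 n (j - 1) ≤ stirling1 n j ^ 2 := by
  intro n
  induction n with
  | zero =>
    intro j
    have : stirling1 0 (j + 1) = 0 := rfl
    simp [this]
  | succ n ih =>
    intro j
    match j with
    | 0 => simp [stirling1]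
    | 1 => simp [stirling1]
    | m + 2 =>
      have h1 : stirling1 n (m + 2) * stirling1 n m ≤ stirling1 n (m + 1) ^ 2 := ih (m + 1)
      have h2 : stirling1 n (m + 3) * stirling1 n (m + 1) ≤ stirling1 n (m + 2) ^ 2 :=
        ih (m + 2)
      set a := stirling1 n m with ha
      set b := stirling1 n (m + 1) with hb
      set c := stirling1 n (m + 2) with hc
      set d := stirling1 n (m + 3) with hd
      have h3 : a * d ≤ b * c := by
        rcases Nat.eq_zero_or_pos (b * c) with h | h
        · have hd0 : d = 0 := by
            rcases Nat.mul_eq_zero.mp h with h0 | h0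
            · have : n < m + 1 := by
                by_contra hcon
                exact absurd h0 (stirling1_pos n (m + 1) (by omega) (by omega)).ne'
              exact stirling1_eq_zero n (m + 3) (by omega)
            · have : n < m + 2 := by
                by_contra hcon
                exact absurd h0 (stirling1_pos n (m + 2) (by omega) (by omega)).ne'
              exact stirling1_eq_zero n (m + 3) (by omega)
          simp [hd0]
        · have key : (a * d) * (b * c) ≤ (b * c) * (b * c) := by
            calc (a * d) * (b * c) = (c * a) * (d * b) := by ring
              _ ≤ b ^ 2 * c ^ 2 := Nat.mul_le_mul h1 h2
              _ = (b * c) * (b * c) := by ring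
          exact Nat.le_of_mul_le_mul_right key h
      show (c + n * d) * (a + n * b) ≤ (b + n * c) ^ 2
      calc (c + n * d) * (a + n * b)
          = c * a + n * (b * c) + n * (a * d) + n * n * (d * b) := by ring
        _ ≤ b ^ 2 + n * (b * c) + n * (b * c) + n * n * (c ^ 2) :=
            add_le_add (add_le_add (add_le_add h1 le_rfl)
              (Nat.mul_le_mul le_rfl h3)) (Nat.mul_le_mul le_rfl h2)
        _ = (b + n * c) ^ 2 := by ring

theorem stmt_10 (n j : ℕ) (hn : 1 ≤ n) (hj : 2 ≤ j) (hjn : j + 1 ≤ n) :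
    stirling1 n j ^ 2 ≥ stirling1 n (j + 1) * stirling1 n (j - 1) := by
  exact stirling1_logconcave n j
end

section
/- For fixed k ≥ 2, the ratio S(j+1,k)/S(j,k) is strictly decreasing in j ≥ k; in particular S(j,k)² > S(j+1,k)·S(j-1,k) for j > k. -/
lemma stirling2_rec (n k : ℕ) :
    stirling2 (n + 1) (k + 1) = stirling2 n k + (k + 1) * stirling2 n (k + 1) := rfl

lemma stirling2_pos : ∀ n k : ℕ, k ≤ n → 0 < stirling2 (n + 1) (k + 1) := by
  intro n
  induction n with
  | zero => intro k hk; interval_cases k; simp [stirling2]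
  | succ n ih =>
    intro k hk
    rw [stirling2_rec]
    cases k with
    | zero =>
      have := ih 0 (Nat.zero_le n)
      positivity
    | succ m =>
      have := ih m (by omega)
      positivity

/-- Generalized log-concavity in k. -/
lemma stirling2_Q : ∀ n a b : ℕ, b ≤ a →
    stirling2 n (a + 1) * stirling2 n b ≤ stirling2 n a * stirling2 n (b + 1) := by
  intro n
  induction n with
  | zero => intro a b _; simp [stirling2]
  | succ n ih =>
    intro a b hba
    cases b with
    | zero => simp [stirling2]
    | succ B =>
      obtain ⟨A, rfl⟩ : ∃ A, a = A + 1 := ⟨a - 1, by omega⟩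
      rcases eq_or_lt_of_le (show B ≤ A by omega) with rfl | hBA
      · rw [mul_comm]
      · have h1 := ih A B (by omega)
        have h2 := ih (A + 1) B (by omega)
        have h3 := ih (A + 1) (B + 1) (by omega)
        have h4 := ih A (B + 1) (by omega)
        rw [stirling2_rec, stirling2_rec, stirling2_rec, stirling2_rec]
        have e2 : (A + 2) * (stirling2 n (A + 2) * stirling2 n B)
            ≤ (A + 2) * (stirling2 n (A + 1) * stirling2 n (B + 1)) :=
          Nat.mul_le_mul_left _ h2
        have e3 : ((A + 2) * (B + 1)) * (stirling2 n (A + 2) * stirling2 n (B + 1))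
            ≤ ((A + 2) * (B + 1)) * (stirling2 n (A + 1) * stirling2 n (B + 2)) :=
          Nat.mul_le_mul_left _ h3
        have e4 : (B + 2) * (stirling2 n (A + 1) * stirling2 n (B + 1))
            ≤ (B + 2) * (stirling2 n A * stirling2 n (B + 2)) :=
          Nat.mul_le_mul_left _ h4
        have e5 : ((A + 2) * (B + 1)) * (stirling2 n (A + 1) * stirling2 n (B + 2))
            ≤ ((A + 1) * (B + 2)) * (stirling2 n (A + 1) * stirling2 n (B + 2)) :=
          Nat.mul_le_mul_right _ (by nlinarith)
        nlinarith [e2, e3, e4, e5, h1]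

/-- Strict log-concavity in n. -/
lemma stirling2_key (n m : ℕ) (h : m + 2 ≤ n) :
    stirling2 (n + 2) (m + 2) * stirling2 n (m + 2)
      < stirling2 (n + 1) (m + 2) * stirling2 (n + 1) (m + 2) := by
  obtain ⟨N, rfl⟩ : ∃ N, n = N + 1 := ⟨n - 1, by omega⟩
  have hQ := stirling2_Q (N + 1) (m + 1) m (Nat.le_succ m)
  have hp1 : 0 < stirling2 (N + 1) (m + 1) := stirling2_pos N m (by omega)
  have hp2 : 0 < stirling2 (N + 1) (m + 2) := stirling2_pos N (m + 1) (by omega)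
  rw [stirling2_rec (N + 2), stirling2_rec (N + 1), stirling2_rec (N + 1) (m + 1)]
  nlinarith [hQ, hp1, hp2]

open scoped BigOperators
theorem stmt_11 (k : ℕ) (hk : 2 ≤ k) :
    (∀ j : ℕ, k ≤ j →
        (stirling2 (j + 2) k : ℚ) / (stirling2 (j + 1) k : ℚ) <
          (stirling2 (j + 1) k : ℚ) / (stirling2 j k : ℚ)) ∧
      (∀ j : ℕ, k < j →
        (stirling2 j k : ℚ) ^ 2 > (stirling2 (j + 1) k : ℚ) * (stirling2 (j - 1) k : ℚ)) := by
  obtain ⟨m, rfl⟩ : ∃ m, k = m + 2 := ⟨k - 2, by omega⟩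
  constructor
  · intro j hj
    have hp0 : 0 < stirling2 j (m + 2) := by
      obtain ⟨J, rfl⟩ : ∃ J, j = J + 1 := ⟨j - 1, by omega⟩
      exact stirling2_pos J (m + 1) (by omega)
    have hp1 : 0 < stirling2 (j + 1) (m + 2) := stirling2_pos j (m + 1) (by omega)
    have key := stirling2_key j m hj
    rw [div_lt_div_iff₀ (by exact_mod_cast hp1) (by exact_mod_cast hp0)]
    exact_mod_cast key
  · intro j hj
    obtain ⟨i, rfl⟩ : ∃ i, j = i + 1 := ⟨j - 1, by omega⟩
    have key := stirling2_key i m (by omega)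
    have : (stirling2 (i + 2) (m + 2) * stirling2 i (m + 2) : ℚ)
        < stirling2 (i + 1) (m + 2) * stirling2 (i + 1) (m + 2) := by exact_mod_cast key
    simpa [pow_two, gt_iff_lt, mul_comm] using this
end
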